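/- Fix integers k ≥ 0, j ≥ 0 and i ≥ 1, and assume either i ≤ j or i ≤ k+j−2. Let B_i be the following set of 3k+5j+4+i distinct lines of the real projective plane: the line z = 0; the lines x = s·z and y = s·z for each integer −j ≤ s ≤ k+j; and the lines x + y = c·z for each integer −j ≤ c ≤ k+i. Let H be the line x + y = (k+i)·z, which belongs to B_i. Then the set of intersection points {H ∩ K : K ∈ B_i, K ≠ H} has exactly k+2j+2+i elements. (Equivalently, the number of triple points satisfies t_{B_i, H} = 2k+3j+1.) -/

import Mathlib

noncomputable section

/-- The projective line `{a·x + b·y + c·z = 0}` regarded as the 2-dimensional subspace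
of `ℝ³` cut out by the linear form with coefficients `a, b, c`. -/
def lineL (a b c : ℝ) : Submodule ℝ (Fin 3 → ℝ) :=
  LinearMap.ker
    ((a • LinearMap.proj 0 + b • LinearMap.proj 1 + c • LinearMap.proj 2 :
      (Fin 3 → ℝ) →ₗ[ℝ] ℝ))

/-- The grid arrangement: the line at infinity `z = 0` together with the lines
`x = s·z` and `y = s·z` for integers `-j ≤ s ≤ k+j`. -/
def gridLines (k j : ℕ) : Set (Submodule ℝ (Fin 3 → ℝ)) :=
  {lineL 0 0 1} ∪
    {L | ∃ s : ℤ, -(j : ℤ) ≤ s ∧ s ≤ (k : ℤ) + j ∧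
      (L = lineL 1 0 (-(s : ℝ)) ∨ L = lineL 0 1 (-(s : ℝ)))}

/-! Every line of `B_i` other than `H : x + y = m·z` (`m = k + i`) meets `H` either at the common
point at infinity `(1 : -1 : 0)` of the diagonals (this covers `z = 0` and the other diagonals) or
at an affine point `(t, m - t)`, with `t = s` for the line `x = s·z` and `t = m - s` for the line
`y = s·z`. As `s` runs over `[-j, k + j]` the two ranges of `t` together cover `[-j, m + j]`, with
no gap precisely because `i ≤ k + 2j`; so `H` carries `k + i + 2j + 1` affine intersection points
and one at infinity. -/

open Set

theorem Int.ncard_Icc (a b : ℤ) : (Icc a b).ncard = (b + 1 - a).toNat := by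
  simpa [← Set.ncard_coe_finset] using Int.card_Icc a b

theorem mem_lineL {a b c : ℝ} {v : Fin 3 → ℝ} :
    v ∈ lineL a b c ↔ a * v 0 + b * v 1 + c * v 2 = 0 := by
  simp [lineL, smul_eq_mul]

@[simp]
theorem vecCons_mem_lineL {a b c x y z : ℝ} :
    ![x, y, z] ∈ lineL a b c ↔ a * x + b * y + c * z = 0 := by
  simp [mem_lineL]

theorem lineL_ne_of_mem_of_notMem {a b c a' b' c' : ℝ} {v : Fin 3 → ℝ}
    (h : v ∈ lineL a b c) (h' : v ∉ lineL a' b' c') : lineL a b c ≠ lineL a' b' c' :=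
  fun e => h' (e ▸ h)

theorem lineL_injective {a b : ℝ} (hab : a ≠ 0 ∨ b ≠ 0) :
    Function.Injective (lineL a b) := by
  intro c c' e
  have hn : a ^ 2 + b ^ 2 ≠ 0 := by rcases hab with h | h <;> positivity
  have hv : ![-c * a / (a ^ 2 + b ^ 2), -c * b / (a ^ 2 + b ^ 2), 1] ∈ lineL a b c := by
    rw [vecCons_mem_lineL]; field_simp; ring
  rw [e, vecCons_mem_lineL] at hv
  field_simp at hv
  exact mul_left_cancel₀ hn (by linear_combination -hv)

theorem lineL_inf_lineL_of_det_ne_zero {a b c a' b' c' : ℝ} (hd : a * b' - a' * b ≠ 0) :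
    lineL a b c ⊓ lineL a' b' c' =
      ℝ ∙ ![(b * c' - b' * c) / (a * b' - a' * b), (a' * c - a * c') / (a * b' - a' * b),
        1] := by
  set d := a * b' - a' * b with hd_def
  apply le_antisymm
  · intro v hv
    obtain ⟨h, h'⟩ := Submodule.mem_inf.mp hv
    rw [mem_lineL] at h h'
    refine Submodule.mem_span_singleton.mpr ⟨v 2, ?_⟩
    ext r; fin_cases r
    · show v 2 * ((b * c' - b' * c) / d) = v 0
      field_simp
      linear_combination b * h' - b' * h - v 0 * hd_def
    · show v 2 * ((a' * c - a * c') / d) = v 1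
      field_simp
      linear_combination a' * h - a * h' - v 1 * hd_def
    · exact mul_one _
  · rw [Submodule.span_singleton_le_iff_mem, Submodule.mem_inf, vecCons_mem_lineL,
      vecCons_mem_lineL]
    constructor <;> field_simp
    · linear_combination c * hd_def
    · linear_combination c' * hd_def

theorem lineL_inf_lineL_zero_zero_one {a b c : ℝ} (ha : a ≠ 0) :
    lineL a b c ⊓ lineL 0 0 1 = ℝ ∙ ![b, -a, 0] := by
  apply le_antisymm
  · intro v hv
    obtain ⟨h, h'⟩ := Submodule.mem_inf.mp hv
    rw [mem_lineL] at h h'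
    have hz : v 2 = 0 := by linarith
    refine Submodule.mem_span_singleton.mpr ⟨-v 1 / a, ?_⟩
    ext r; fin_cases r
    · show -v 1 / a * b = v 0
      field_simp
      linear_combination -h + c * hz
    · show -v 1 / a * -a = v 1
      field_simp
    · exact (mul_zero _).trans hz.symm
  · rw [Submodule.span_singleton_le_iff_mem, Submodule.mem_inf, vecCons_mem_lineL,
      vecCons_mem_lineL]
    constructor <;> ring

theorem lineL_inf_lineL_of_ne {a b c c' : ℝ} (hc : c ≠ c') :
    lineL a b c ⊓ lineL a b c' = lineL a b c ⊓ lineL 0 0 1 := by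
  ext v
  simp only [Submodule.mem_inf, mem_lineL, zero_mul, one_mul, zero_add]
  refine and_congr_right fun h =>
    ⟨fun h' => ?_, fun hz => by linear_combination h + (c' - c) * hz⟩
  refine (mul_eq_zero.mp ?_).resolve_left (sub_ne_zero.mpr hc)
  linear_combination h - h'

def affinePoint (x y : ℝ) : Submodule ℝ (Fin 3 → ℝ) := ℝ ∙ ![x, y, 1]

theorem affinePoint_inj {x y x' y' : ℝ} :
    affinePoint x y = affinePoint x' y' ↔ x = x' ∧ y = y' := by
  refine ⟨fun h => ?_, fun ⟨hx, hy⟩ => hx ▸ hy ▸ rfl⟩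
  obtain ⟨u, hu⟩ := Submodule.span_singleton_eq_span_singleton.mp h
  have hu1 : (u : ℝ) = 1 := by simpa [Units.smul_def] using congrFun hu 2
  simpa [Units.smul_def, hu1] using And.intro (congrFun hu 0) (congrFun hu 1)

theorem affinePoint_ne_span_of_apply_two_eq_zero {v : Fin 3 → ℝ} (hv : v 2 = 0) (x y : ℝ) :
    affinePoint x y ≠ ℝ ∙ v := by
  intro h
  have hmem : ![x, y, 1] ∈ ℝ ∙ v := h ▸ Submodule.mem_span_singleton_self _
  obtain ⟨r, hr⟩ := Submodule.mem_span_singleton.mp hmem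
  simpa [hv] using congrFun hr 2

def verticalLine (s : ℤ) : Submodule ℝ (Fin 3 → ℝ) := lineL 1 0 (-s)

def horizontalLine (s : ℤ) : Submodule ℝ (Fin 3 → ℝ) := lineL 0 1 (-s)

def diagonalLine (c : ℤ) : Submodule ℝ (Fin 3 → ℝ) := lineL 1 1 (-c)

theorem verticalLine_injective : Function.Injective verticalLine :=
  (lineL_injective (by norm_num)).comp (neg_injective.comp Int.cast_injective)

theorem horizontalLine_injective : Function.Injective horizontalLine :=
  (lineL_injective (by norm_num)).comp (neg_injective.comp Int.cast_injective)

theorem diagonalLine_injective : Function.Injective diagonalLine :=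
  (lineL_injective (by norm_num)).comp (neg_injective.comp Int.cast_injective)

theorem verticalLine_ne_horizontalLine (s t : ℤ) : verticalLine s ≠ horizontalLine t :=
  lineL_ne_of_mem_of_notMem (v := ![0, 1, 0]) (by simp) (by simp)

theorem diagonalLine_ne_lineL_zero_zero_one (c : ℤ) : diagonalLine c ≠ lineL 0 0 1 :=
  lineL_ne_of_mem_of_notMem (v := ![c, 0, 1]) (by simp) (by simp)

theorem diagonalLine_ne_verticalLine (c s : ℤ) : diagonalLine c ≠ verticalLine s :=
  (lineL_ne_of_mem_of_notMem (v := ![0, 1, 0]) (by simp) (by simp)).symm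

theorem diagonalLine_ne_horizontalLine (c s : ℤ) : diagonalLine c ≠ horizontalLine s :=
  (lineL_ne_of_mem_of_notMem (v := ![1, 0, 0]) (by simp) (by simp)).symm

theorem lineL_zero_zero_one_ne_verticalLine (s : ℤ) : lineL 0 0 1 ≠ verticalLine s :=
  lineL_ne_of_mem_of_notMem (v := ![1, 0, 0]) (by simp) (by simp)

theorem lineL_zero_zero_one_ne_horizontalLine (s : ℤ) : lineL 0 0 1 ≠ horizontalLine s :=
  lineL_ne_of_mem_of_notMem (v := ![0, 1, 0]) (by simp) (by simp)

theorem diagonalLine_inf_verticalLine (m s : ℤ) :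
    diagonalLine m ⊓ verticalLine s = affinePoint s (m - s) := by
  rw [diagonalLine, verticalLine, lineL_inf_lineL_of_det_ne_zero (by norm_num), affinePoint]
  norm_num [neg_add_eq_sub, div_neg, neg_sub]

theorem diagonalLine_inf_horizontalLine (m s : ℤ) :
    diagonalLine m ⊓ horizontalLine s = affinePoint (m - s) s := by
  rw [diagonalLine, horizontalLine, lineL_inf_lineL_of_det_ne_zero (by norm_num), affinePoint]
  norm_num [neg_add_eq_sub]

theorem diagonalLine_inf_lineL_zero_zero_one (m : ℤ) :
    diagonalLine m ⊓ lineL 0 0 1 = ℝ ∙ ![1, -1, 0] :=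
  lineL_inf_lineL_zero_zero_one one_ne_zero

theorem diagonalLine_inf_diagonalLine {m c : ℤ} (h : c ≠ m) :
    diagonalLine m ⊓ diagonalLine c = diagonalLine m ⊓ lineL 0 0 1 :=
  lineL_inf_lineL_of_ne (neg_injective.ne (Int.cast_injective.ne h.symm))

theorem gridLines_eq (k j : ℕ) :
    gridLines k j = insert (lineL 0 0 1)
      (verticalLine '' Icc (-j) (k + j) ∪ horizontalLine '' Icc (-j) (k + j)) := by
  ext L
  simp only [gridLines, verticalLine, horizontalLine, mem_union, mem_insert_iff, mem_singleton_iff,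
    mem_ofPred_eq, mem_image, mem_Icc]
  constructor
  · rintro (h | ⟨s, h1, h2, h | h⟩)
    · exact Or.inl h
    · exact Or.inr (Or.inl ⟨s, ⟨h1, h2⟩, h.symm⟩)
    · exact Or.inr (Or.inr ⟨s, ⟨h1, h2⟩, h.symm⟩)
  · rintro (h | ⟨s, hs, rfl⟩ | ⟨s, hs, rfl⟩)
    · exact Or.inl h
    · exact Or.inr ⟨s, hs.1, hs.2, Or.inl rfl⟩
    · exact Or.inr ⟨s, hs.1, hs.2, Or.inr rfl⟩

theorem gridLines_finite (k j : ℕ) : (gridLines k j).Finite := by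
  rw [gridLines_eq]
  exact toFinite _

theorem ncard_gridLines (k j : ℕ) : (gridLines k j).ncard = 2 * (k + 2 * j + 1) + 1 := by
  rw [gridLines_eq]
  set I := Icc (-(j : ℤ)) (k + j)
  have hdisj : Disjoint (verticalLine '' I) (horizontalLine '' I) := by
    rw [disjoint_left]
    rintro _ ⟨s, -, rfl⟩ ⟨t, -, h⟩
    exact verticalLine_ne_horizontalLine s t h.symm
  have hz : lineL 0 0 1 ∉ verticalLine '' I ∪ horizontalLine '' I := by
    rintro (⟨s, -, h⟩ | ⟨s, -, h⟩)
    · exact lineL_zero_zero_one_ne_verticalLine s h.symm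
    · exact lineL_zero_zero_one_ne_horizontalLine s h.symm
  rw [ncard_insert_of_notMem hz, ncard_union_eq hdisj,
    ncard_image_of_injective _ verticalLine_injective,
    ncard_image_of_injective _ horizontalLine_injective, Int.ncard_Icc]
  omega

theorem diagonalLine_notMem_gridLines (c : ℤ) (k j : ℕ) : diagonalLine c ∉ gridLines k j := by
  rw [gridLines_eq]
  rintro (h | ⟨s, -, h⟩ | ⟨s, -, h⟩)
  · exact diagonalLine_ne_lineL_zero_zero_one c h
  · exact diagonalLine_ne_verticalLine c s h.symm
  · exact diagonalLine_ne_horizontalLine c s h.symm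

theorem image_diagonalLine_inf_gridLines (m : ℤ) (k j : ℕ) :
    (diagonalLine m ⊓ ·) '' gridLines k j = insert (ℝ ∙ ![1, -1, 0])
      ((fun t : ℤ => affinePoint t (m - t)) ''
        (Icc (-j) (k + j) ∪ Icc (m - (k + j)) (m + j))) := by
  rw [gridLines_eq, image_insert_eq, image_union, image_image, image_image,
    diagonalLine_inf_lineL_zero_zero_one, image_union, ← sub_neg_eq_add m,
    ← image_const_sub_Icc, image_image]
  simp only [diagonalLine_inf_verticalLine, diagonalLine_inf_horizontalLine, Int.cast_sub,
    sub_sub_cancel]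

theorem ncard_insert_image_affinePoint_Icc (m a b : ℤ) :
    (insert (ℝ ∙ ![1, -1, 0]) ((fun t : ℤ => affinePoint t (m - t)) '' Icc a b)).ncard =
      (b + 1 - a).toNat + 1 := by
  have hinf : ℝ ∙ ![1, -1, 0] ∉ (fun t : ℤ => affinePoint t (m - t)) '' Icc a b := by
    rintro ⟨t, -, h⟩
    exact affinePoint_ne_span_of_apply_two_eq_zero (by simp) _ _ h
  have hinj : Function.Injective fun t : ℤ => affinePoint t (m - t) :=
    fun s t h => by simpa using (affinePoint_inj.mp h).1
  rw [ncard_insert_of_notMem hinf, ncard_image_of_injective _ hinj, Int.ncard_Icc]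

theorem outer_diagonal_intersections_general (k j i : ℕ)
    (hi2 : i ≤ j ∨ i + 2 ≤ k + j) :
    let Bi : Set (Submodule ℝ (Fin 3 → ℝ)) :=
      gridLines k j ∪
        {L | ∃ c : ℤ, -(j : ℤ) ≤ c ∧ c ≤ (k : ℤ) + i ∧ L = lineL 1 1 (-(c : ℝ))}
    let H := lineL 1 1 (-((k : ℝ) + (i : ℝ)))
    Bi.ncard = 3 * k + 5 * j + 4 + i ∧
    H ∈ Bi ∧
    ((fun K => H ⊓ K) '' (Bi \ {H})).ncard = k + 2 * j + 2 + i := by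
  intro Bi H
  have hBi : Bi = gridLines k j ∪ diagonalLine '' Icc (-j) (k + i) := by
    simp only [Bi, diagonalLine]
    congr 1
    ext L
    simp [diagonalLine, eq_comm, and_assoc]
  have hH : H = diagonalLine (k + i) := by simp [H, diagonalLine]
  have hdisj : Disjoint (gridLines k j) (diagonalLine '' Icc (-j) (k + i)) := by
    rw [disjoint_right]
    rintro _ ⟨c, -, rfl⟩
    exact diagonalLine_notMem_gridLines c k j
  refine ⟨?_, ?_, ?_⟩
  · rw [hBi, ncard_union_eq hdisj (gridLines_finite k j) ((finite_Icc _ _).image _),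
      ncard_gridLines, ncard_image_of_injective _ diagonalLine_injective, Int.ncard_Icc]
    omega
  · rw [hBi, hH]
    exact Or.inr (mem_image_of_mem _ ⟨by omega, le_rfl⟩)
  · have hpar :
        (H ⊓ ·) '' (diagonalLine '' Icc (-j) (k + i) \ {H}) ⊆ (H ⊓ ·) '' gridLines k j := by
      rintro _ ⟨_, ⟨⟨c, -, rfl⟩, hc⟩, rfl⟩
      refine ⟨lineL 0 0 1, by simp [gridLines], ?_⟩
      rw [hH]
      exact (diagonalLine_inf_diagonalLine (by rintro rfl; exact hc hH.symm)).symm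
    have hcover : Icc (-(j : ℤ)) (k + j) ∪ Icc ((k + i : ℤ) - (k + j)) ((k + i : ℤ) + j) =
        Icc (-(j : ℤ)) (k + i + j) := by
      rw [Icc_union_Icc' (by omega) (by omega), min_eq_left (by omega), max_eq_right (by omega)]
    rw [hBi, union_sdiff_distrib,
      sdiff_singleton_eq_self (hH ▸ diagonalLine_notMem_gridLines _ k j), image_union,
      union_eq_left.mpr hpar, hH, image_diagonalLine_inf_gridLines, hcover,
      ncard_insert_image_affinePoint_Icc]
    omega

/-- For the arrangement `B_i = grid ∪ {x+y = c·z, -j ≤ c ≤ k+i}` and its member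
`H : x + y = (k+i)·z`, the set of intersection points of `H` with the other lines has
`k+2j+2+i` elements, i.e. `t_{B_i, H} = 2k+3j+1`. -/
theorem outer_diagonal_intersections (k j i : ℕ) (hi1 : 1 ≤ i)
    (hi2 : i ≤ j ∨ i + 2 ≤ k + j) :
    let Bi : Set (Submodule ℝ (Fin 3 → ℝ)) :=
      gridLines k j ∪
        {L | ∃ c : ℤ, -(j : ℤ) ≤ c ∧ c ≤ (k : ℤ) + i ∧ L = lineL 1 1 (-(c : ℝ))}
    let H := lineL 1 1 (-((k : ℝ) + (i : ℝ)))
    Bi.ncard = 3 * k + 5 * j + 4 + i ∧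
    H ∈ Bi ∧
    ((fun K => H ⊓ K) '' (Bi \ {H})).ncard = k + 2 * j + 2 + i :=
  outer_diagonal_intersections_general k j i hi2
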